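/- arXiv:2211.06676 — 6 statements merged into one kernel-verified Lean document; each statement's English description precedes it below -/
import Mathlib

section
/- A monotone structure M ⊆ F × F* is maximal with respect to the monotonicity property (no strictly larger monotone subspace contains it) if and only if dim M = dim F. -/
/-!
Fix a symmetric positive definite pairing `J : F → F*` (from a basis). If `(f, e)` lies in a
monotone `M` and `e + J f = 0`, then `0 ≤ e f = -J f f` forces `f = 0`; so `(f, e) ↦ e + J f` is
injective on `M` and `dim M ≤ dim F`. Conversely, if `dim M < dim F`, the image of `M` under this
map is a proper subspace of `F*`, so some `u ≠ 0` is annihilated by it. Then `(u, J u)` is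
orthogonal to `M` for the symmetrised pairing and `J u u > 0`, so `M + ℝ (u, J u)` is a strictly
larger monotone subspace.
-/

open Module

namespace Module.Basis

variable {R F ι : Type*} [Fintype ι] [DecidableEq ι]

theorem toDual_apply_eq_sum [CommSemiring R] [AddCommMonoid F] [Module R F]
    (b : Basis ι R F) (f g : F) :
    b.toDual f g = ∑ i, b.repr f i * b.repr g i := by
  conv_lhs => rw [← b.sum_repr g]
  simp only [map_sum, map_smul, toDual_apply_left, smul_eq_mul, mul_comm]

theorem toDual_apply_comm [CommSemiring R] [AddCommMonoid F] [Module R F]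
    (b : Basis ι R F) (f g : F) : b.toDual f g = b.toDual g f := by
  simp only [toDual_apply_eq_sum, mul_comm]

variable [CommRing R] [LinearOrder R] [IsStrictOrderedRing R] [AddCommGroup F] [Module R F]

theorem toDual_apply_self_pos (b : Basis ι R F) {f : F} (hf : f ≠ 0) : 0 < b.toDual f f := by
  obtain ⟨i, hi⟩ : ∃ i, b.repr f i ≠ 0 := by
    by_contra! h
    exact hf (b.ext_elem_iff.mpr fun i ↦ by simp [h i])
  rw [toDual_apply_eq_sum]
  exact Finset.sum_pos' (fun j _ ↦ mul_self_nonneg _) ⟨i, Finset.mem_univ _, mul_self_pos.mpr hi⟩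

end Module.Basis

section Monotone

variable {𝕜 F : Type*} [Field 𝕜] [LinearOrder 𝕜] [IsStrictOrderedRing 𝕜]
  [AddCommGroup F] [Module 𝕜 F]

def IsMonotoneSubspace (M : Submodule 𝕜 (F × Dual 𝕜 F)) : Prop :=
  ∀ p ∈ M, 0 ≤ p.2 p.1

theorem IsMonotoneSubspace.sup_span_singleton {M : Submodule 𝕜 (F × Dual 𝕜 F)}
    (hM : IsMonotoneSubspace M) {v : F × Dual 𝕜 F} (hv : 0 ≤ v.2 v.1)
    (horth : ∀ p ∈ M, p.2 v.1 + v.2 p.1 = 0) :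
    IsMonotoneSubspace (M ⊔ 𝕜 ∙ v) := by
  intro q hq
  obtain ⟨p, hp, w, hw, rfl⟩ := Submodule.mem_sup.mp hq
  obtain ⟨t, rfl⟩ := Submodule.mem_span_singleton.mp hw
  have hexpand : (p + t • v).2 (p + t • v).1 =
      p.2 p.1 + t * (p.2 v.1 + v.2 p.1) + t ^ 2 * v.2 v.1 := by
    simp only [Prod.fst_add, Prod.snd_add, Prod.smul_fst, Prod.smul_snd, map_add, map_smul,
      LinearMap.add_apply, LinearMap.smul_apply, smul_eq_mul]
    ring
  rw [hexpand, horth p hp, mul_zero, add_zero]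
  exact add_nonneg (hM p hp) (mul_nonneg (sq_nonneg t) hv)

variable (J : F →ₗ[𝕜] Dual 𝕜 F)

theorem IsMonotoneSubspace.injective_coprod_comp_subtype (hJpos : ∀ f ≠ 0, 0 < J f f)
    {M : Submodule 𝕜 (F × Dual 𝕜 F)} (hM : IsMonotoneSubspace M) :
    Function.Injective (J.coprod LinearMap.id ∘ₗ M.subtype) := by
  refine (injective_iff_map_eq_zero _).mpr ?_
  rintro ⟨⟨f, e⟩, hp⟩ h
  have he : e = -J f := eq_neg_of_add_eq_zero_right (by simpa using h)
  have hf : f = 0 := by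
    by_contra hf
    have hmono := hM _ hp
    simp only [he, LinearMap.neg_apply] at hmono
    exact (hJpos f hf).not_ge (neg_nonneg.mp hmono)
  simp [hf, he]

variable [FiniteDimensional 𝕜 F]

theorem IsMonotoneSubspace.finrank_le (hJpos : ∀ f ≠ 0, 0 < J f f)
    {M : Submodule 𝕜 (F × Dual 𝕜 F)} (hM : IsMonotoneSubspace M) :
    finrank 𝕜 M ≤ finrank 𝕜 F :=
  (LinearMap.finrank_le_finrank_of_injective (hM.injective_coprod_comp_subtype J hJpos)).trans_eq
    Subspace.dual_finrank_eq

theorem IsMonotoneSubspace.exists_gt_of_finrank_lt (hJsymm : ∀ f g, J f g = J g f)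
    (hJpos : ∀ f ≠ 0, 0 < J f f) {M : Submodule 𝕜 (F × Dual 𝕜 F)} (hM : IsMonotoneSubspace M)
    (hlt : finrank 𝕜 M < finrank 𝕜 F) :
    ∃ M', IsMonotoneSubspace M' ∧ M < M' := by
  set W := M.map (J.coprod LinearMap.id)
  have hW : finrank 𝕜 W.dualCoannihilator ≠ 0 := by
    have hWM : finrank 𝕜 W ≤ finrank 𝕜 M := Submodule.finrank_map_le _ _
    have hsum := Subspace.finrank_add_finrank_dualCoannihilator_eq W
    omega
  obtain ⟨u, huW, hu⟩ := Submodule.exists_mem_ne_zero_of_ne_bot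
    (mt Submodule.finrank_eq_zero.mpr hW)
  have horth : ∀ p ∈ M, J p.1 u + p.2 u = 0 := fun p hp ↦
    (Submodule.mem_dualCoannihilator u).mp huW _ (Submodule.mem_map_of_mem hp)
  have hnotMem : (u, J u) ∉ M := fun hmem ↦ by
    have h2Juu : J u u + J u u = 0 := horth _ hmem
    linarith [hJpos u hu]
  refine ⟨M ⊔ 𝕜 ∙ (u, J u), hM.sup_span_singleton (hJpos u hu).le fun p hp ↦ ?_,
    Submodule.lt_sup_iff_notMem.mpr hnotMem⟩
  rw [hJsymm, add_comm]
  exact horth p hp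

end Monotone

theorem maximally_monotone_iff_dim_eq
    (F : Type*) [AddCommGroup F] [Module ℝ F] [FiniteDimensional ℝ F]
    (M : Submodule ℝ (F × Module.Dual ℝ F))
    (hM : ∀ p ∈ M, (0 : ℝ) ≤ p.2 p.1) :
    (∀ M' : Submodule ℝ (F × Module.Dual ℝ F),
        (∀ p ∈ M', (0 : ℝ) ≤ p.2 p.1) → M ≤ M' → M' = M)
      ↔ Module.finrank ℝ M = Module.finrank ℝ F := by
  let b := Module.finBasis ℝ F
  have hJsymm := b.toDual_apply_comm
  have hJpos : ∀ f ≠ 0, 0 < b.toDual f f := fun f ↦ b.toDual_apply_self_pos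
  have hle : finrank ℝ M ≤ finrank ℝ F := IsMonotoneSubspace.finrank_le _ hJpos hM
  constructor
  · intro hmax
    refine hle.antisymm (not_lt.mp fun hlt ↦ ?_)
    obtain ⟨M', hM', hMM'⟩ := IsMonotoneSubspace.exists_gt_of_finrank_lt _ hJsymm hJpos hM hlt
    exact hMM'.ne' (hmax M' hM' hMM'.le)
  · intro hrank M' hM' hMM'
    exact (Submodule.eq_of_le_of_finrank_le hMM'
      (hrank ▸ IsMonotoneSubspace.finrank_le _ hJpos hM')).symm
end

section
/- Every Dirac structure D ⊆ F × F* (a subspace on which ⟨·,·⟩₊ vanishes identically, maximal with this property) is a maximally monotone structure. -/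
/-!
Since `⟨p, p⟩₊ = 2 p.2 p.1`, an isotropic `D` is monotone. If `M ⊇ D` is monotone, `d ∈ D` and
`q ∈ M`, then `t ↦ ⟨t • d + q, t • d + q⟩₊ = 2 t ⟨d, q⟩₊ + ⟨q, q⟩₊` is nonnegative on all of `ℝ`,
so `⟨d, q⟩₊ = 0`: `M` lies in the orthogonal companion `D^⊥`, and it remains to see `D^⊥ ⊆ D`.

By maximality, every `(0, φ)` with `φ` vanishing on the projection `π(D) ⊆ F` lies in `D`, being
isotropic and orthogonal to `D`. For `q ∈ D^⊥` all these `φ` then kill `q.1`, so `q.1 = d.1` for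
some `d ∈ D`, and `q - d` is again of the form `(0, φ)`.
-/

theorem LinearMap.BilinForm.IsSymm.apply_eq_zero_of_apply_self_eq_zero
    {K V : Type*} [Field K] [LinearOrder K] [IsStrictOrderedRing K] [AddCommGroup V]
    [Module K V] {B : LinearMap.BilinForm K V} (hB : B.IsSymm) {M : Submodule K V}
    (hM : ∀ v ∈ M, 0 ≤ B v v) {d q : V} (hd : d ∈ M) (hq : q ∈ M) (hdd : B d d = 0) :
    B d q = 0 := by
  have hline : ∀ t : K, 0 ≤ 2 * t * B d q + B q q := fun t => by
    have := hM (t • d + q) (M.add_mem (M.smul_mem t hd) hq)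
    simp only [map_add, map_smul, LinearMap.add_apply, LinearMap.smul_apply, smul_eq_mul, hdd,
      hB.eq q d] at this
    linarith
  by_contra h
  have := hline (-(B q q + 1) / (2 * B d q))
  field_simp at this
  linarith

open Module

namespace DiracStructure

variable {K F : Type*} [Field K] [AddCommGroup F] [Module K F]

variable (K F) in
/-- The pairing `⟨·,·⟩₊` on `F × F*`. -/
def pairing : LinearMap.BilinForm K (F × Dual K F) :=
  LinearMap.mk₂ K (fun p q => p.2 q.1 + q.2 p.1)
    (fun _ _ _ => by
      simp only [Prod.fst_add, Prod.snd_add, map_add, LinearMap.add_apply]; ring)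
    (fun _ _ _ => by
      simp only [Prod.smul_fst, Prod.smul_snd, map_smul, LinearMap.smul_apply, smul_eq_mul]; ring)
    (fun _ _ _ => by
      simp only [Prod.fst_add, Prod.snd_add, map_add, LinearMap.add_apply]; ring)
    (fun _ _ _ => by
      simp only [Prod.smul_fst, Prod.smul_snd, map_smul, LinearMap.smul_apply, smul_eq_mul]; ring)

theorem pairing_apply (p q : F × Dual K F) : pairing K F p q = p.2 q.1 + q.2 p.1 := rfl

theorem pairing_isSymm : (pairing K F).IsSymm :=
  LinearMap.BilinForm.isSymm_def.2 fun p q => by simp only [pairing_apply]; ring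

theorem pairing_self (p : F × Dual K F) : pairing K F p p = 2 * p.2 p.1 := by
  simp only [pairing_apply]; ring

def IsIsotropic (D : Submodule K (F × Dual K F)) : Prop :=
  ∀ p ∈ D, ∀ q ∈ D, pairing K F p q = 0

def IsDirac (D : Submodule K (F × Dual K F)) : Prop :=
  IsIsotropic D ∧ ∀ D' : Submodule K (F × Dual K F), IsIsotropic D' → D ≤ D' → D' = D

variable {D : Submodule K (F × Dual K F)}

theorem IsIsotropic.sup_span_singleton (hD : IsIsotropic D) {q : F × Dual K F}
    (hq : q ∈ (pairing K F).orthogonal D) (hqq : pairing K F q q = 0) :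
    IsIsotropic (D ⊔ K ∙ q) := by
  have hq' : ∀ d ∈ D, pairing K F q d = 0 := fun d hd => pairing_isSymm.eq_iff.1 (hq d hd)
  rintro _ hp _ hp'
  obtain ⟨d, hd, _, hs, rfl⟩ := Submodule.mem_sup.1 hp
  obtain ⟨d', hd', _, hs', rfl⟩ := Submodule.mem_sup.1 hp'
  obtain ⟨a, rfl⟩ := Submodule.mem_span_singleton.1 hs
  obtain ⟨b, rfl⟩ := Submodule.mem_span_singleton.1 hs'
  simp only [map_add, map_smul, LinearMap.add_apply, LinearMap.smul_apply, smul_eq_mul,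
    hD d hd d' hd', hq d hd, hq' d' hd', hqq, mul_zero, add_zero]

theorem IsDirac.mem_of_mem_orthogonal_of_pairing_self (hD : IsDirac D) {q : F × Dual K F}
    (hq : q ∈ (pairing K F).orthogonal D) (hqq : pairing K F q q = 0) : q ∈ D := by
  rw [← hD.2 _ (hD.1.sup_span_singleton hq hqq) le_sup_left]
  exact Submodule.mem_sup_right (Submodule.mem_span_singleton_self q)

theorem IsDirac.zero_prod_mem (hD : IsDirac D) {φ : Dual K F}
    (hφ : φ ∈ (D.map (LinearMap.fst K F (Dual K F))).dualAnnihilator) : ((0 : F), φ) ∈ D := by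
  rw [Submodule.mem_dualAnnihilator] at hφ
  refine hD.mem_of_mem_orthogonal_of_pairing_self (fun d hd => ?_) (by simp [pairing_apply])
  simpa [pairing_apply] using hφ d.1 (Submodule.mem_map_of_mem hd)

theorem IsDirac.fst_mem_map_fst (hD : IsDirac D) {q : F × Dual K F}
    (hq : q ∈ (pairing K F).orthogonal D) : q.1 ∈ D.map (LinearMap.fst K F (Dual K F)) := by
  refine (Subspace.forall_mem_dualAnnihilator_apply_eq_zero_iff _ _).1 fun φ hφ => ?_
  simpa [pairing_apply] using hq _ (hD.zero_prod_mem hφ)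

theorem IsDirac.orthogonal_le (hD : IsDirac D) : (pairing K F).orthogonal D ≤ D := by
  intro q hq
  obtain ⟨d, hd, hdq⟩ := hD.fst_mem_map_fst hq
  have hφ : q.2 - d.2 ∈ (D.map (LinearMap.fst K F (Dual K F))).dualAnnihilator := by
    rw [Submodule.mem_dualAnnihilator]
    rintro _ ⟨d', hd', rfl⟩
    have h₁ := hq d' hd'
    have h₂ := hD.1 d hd d' hd'
    simp only [pairing_apply, LinearMap.fst_apply, LinearMap.sub_apply, ← hdq] at h₁ h₂ ⊢
    linear_combination h₁ - h₂
  have hsum : d + ((0 : F), q.2 - d.2) = q := Prod.ext (by simpa using hdq) (by simp)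
  exact hsum ▸ D.add_mem hd (hD.zero_prod_mem hφ)

end DiracStructure

open DiracStructure in
theorem dirac_is_maximally_monotone_general
    (F : Type*) [AddCommGroup F] [Module ℝ F]
    (D : Submodule ℝ (F × Module.Dual ℝ F))
    (hD0 : ∀ p ∈ D, ∀ q ∈ D, p.2 q.1 + q.2 p.1 = 0)
    (hDmax : ∀ D' : Submodule ℝ (F × Module.Dual ℝ F),
        (∀ p ∈ D', ∀ q ∈ D', p.2 q.1 + q.2 p.1 = 0) → D ≤ D' → D' = D) :
    (∀ p ∈ D, (0 : ℝ) ≤ p.2 p.1) ∧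
      (∀ M' : Submodule ℝ (F × Module.Dual ℝ F),
        (∀ p ∈ M', (0 : ℝ) ≤ p.2 p.1) → D ≤ M' → M' = D) := by
  have hD : IsDirac D := ⟨hD0, hDmax⟩
  have hself : ∀ p ∈ D, p.2 p.1 = 0 := fun p hp => by
    have := hD.1 p hp p hp
    rw [pairing_self] at this
    linarith
  refine ⟨fun p hp => (hself p hp).ge, fun M' hM' hDM' => le_antisymm ?_ hDM'⟩
  have hM'pos : ∀ p ∈ M', 0 ≤ pairing ℝ F p p := fun p hp => by
    rw [pairing_self]; linarith [hM' p hp]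
  refine fun q hq => hD.orthogonal_le fun d hd => ?_
  refine pairing_isSymm.apply_eq_zero_of_apply_self_eq_zero hM'pos (hDM' hd) hq ?_
  rw [pairing_self, hself d hd, mul_zero]

theorem dirac_is_maximally_monotone
    (F : Type*) [AddCommGroup F] [Module ℝ F] [FiniteDimensional ℝ F]
    (D : Submodule ℝ (F × Module.Dual ℝ F))
    (hD0 : ∀ p ∈ D, ∀ q ∈ D, p.2 q.1 + q.2 p.1 = 0)
    (hDmax : ∀ D' : Submodule ℝ (F × Module.Dual ℝ F),
        (∀ p ∈ D', ∀ q ∈ D', p.2 q.1 + q.2 p.1 = 0) → D ≤ D' → D' = D) :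
    (∀ p ∈ D, (0 : ℝ) ≤ p.2 p.1) ∧
      (∀ M' : Submodule ℝ (F × Module.Dual ℝ F),
        (∀ p ∈ M', (0 : ℝ) ≤ p.2 p.1) → D ≤ M' → M' = D) :=
  dirac_is_maximally_monotone_general F D hD0 hDmax
end

section
/- Let M ⊆ F × F* be a maximally monotone structure. Define F₀ = {f : (f,0) ∈ M} and E₁ = {e : ∃ f, (f,e) ∈ M}. Then F₀ equals the annihilator E₁^⊥ = {f ∈ F : e(f) = 0 for all e ∈ E₁}. -/
theorem mms_F0_eq_E1_annihilator
    (F : Type*) [AddCommGroup F] [Module ℝ F] [FiniteDimensional ℝ F]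
    (M : Submodule ℝ (F × Module.Dual ℝ F))
    (hM : ∀ p ∈ M, (0 : ℝ) ≤ p.2 p.1)
    (hMmax : ∀ M' : Submodule ℝ (F × Module.Dual ℝ F),
        (∀ p ∈ M', (0 : ℝ) ≤ p.2 p.1) → M ≤ M' → M' = M) :
    {f : F | (f, (0 : Module.Dual ℝ F)) ∈ M}
      = {f : F | ∀ e : Module.Dual ℝ F, (∃ f', (f', e) ∈ M) → e f = 0} := by
  ext f
  simp only [Set.mem_setOf_eq]
  constructor
  · rintro hf e ⟨f', hf'⟩
    -- Cauchy-Schwarz style: for all t, ((f,0) + t•(f',e)) ∈ M, giving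
    -- t * e f + t^2 * e f' ≥ 0 for all t, with e f' ≥ 0, hence e f = 0.
    set a : ℝ := e f
    set b : ℝ := e f'
    have hb : 0 ≤ b := hM _ hf'
    have key : ∀ t : ℝ, 0 ≤ t * a + t ^ 2 * b := by
      intro t
      have hmem : ((f, (0 : Module.Dual ℝ F)) + t • (f', e)) ∈ M :=
        M.add_mem hf (M.smul_mem t hf')
      have := hM _ hmem
      simp only [Prod.fst_add, Prod.snd_add, Prod.smul_fst, Prod.smul_snd,
        LinearMap.add_apply, LinearMap.smul_apply, map_add, map_smul,
        LinearMap.zero_apply, smul_eq_mul] at this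
      nlinarith [this]
    have h1 := key (-a / (b + 1))
    have hb1 : (0 : ℝ) < b + 1 := by linarith
    have : a = 0 := by
      by_contra ha
      have ha2 : 0 < a ^ 2 := by positivity
      have hdiv : (-a / (b + 1)) * a + (-a / (b + 1)) ^ 2 * b =
          (-(a ^ 2) * (b + 1) + a ^ 2 * b) / (b + 1) ^ 2 := by
        field_simp
      rw [hdiv] at h1
      have hpos : (0 : ℝ) < (b + 1) ^ 2 := by positivity
      rcases div_nonneg_iff.mp h1 with ⟨h2, _⟩ | ⟨_, h2⟩
      · nlinarith
      · nlinarith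
    exact this
  · intro hf
    set M' : Submodule ℝ (F × Module.Dual ℝ F) :=
      M ⊔ Submodule.span ℝ {((f, (0 : Module.Dual ℝ F)))} with hM'def
    have hmono : ∀ p ∈ M', (0 : ℝ) ≤ p.2 p.1 := by
      intro p hp
      rw [hM'def, Submodule.mem_sup] at hp
      obtain ⟨m, hm, z, hz, rfl⟩ := hp
      rw [Submodule.mem_span_singleton] at hz
      obtain ⟨t, rfl⟩ := hz
      have hzero : m.2 f = 0 := hf m.2 ⟨m.1, hm⟩
      have : (m + t • (f, (0 : Module.Dual ℝ F))).2 (m + t • (f, 0)).1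
          = m.2 m.1 := by
        simp [hzero]
      rw [this]
      exact hM m hm
    have heq : M' = M := hMmax M' hmono le_sup_left
    have : (f, (0 : Module.Dual ℝ F)) ∈ M' :=
      Submodule.mem_sup_right (Submodule.mem_span_singleton_self _)
    rwa [heq] at this
end

section
/- Let M ⊆ F × F* be a maximally monotone structure. Define E₀ = {e : (0,e) ∈ M} and F₁ = {f : ∃ e, (f,e) ∈ M} (the domain projection). Then E₀ equals the annihilator F₁^⊥ = {e ∈ F* : e(f) = 0 for all f ∈ F₁}. -/
theorem mms_E0_eq_F1_annihilator
    (F : Type*) [AddCommGroup F] [Module ℝ F] [FiniteDimensional ℝ F]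
    (M : Submodule ℝ (F × Module.Dual ℝ F))
    (hM : ∀ p ∈ M, (0 : ℝ) ≤ p.2 p.1)
    (hMmax : ∀ M' : Submodule ℝ (F × Module.Dual ℝ F),
        (∀ p ∈ M', (0 : ℝ) ≤ p.2 p.1) → M ≤ M' → M' = M) :
    {e : Module.Dual ℝ F | ((0 : F), e) ∈ M}
      = {e : Module.Dual ℝ F | ∀ f : F, (∃ e', (f, e') ∈ M) → e f = 0} := by
  ext e
  simp only [Set.mem_setOf_eq]
  constructor
  · intro h0 f ⟨e', hfe'⟩
    have key : ∀ t : ℝ, 0 ≤ e' f + t * e f := by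
      intro t
      have hmem : ((f, e') + t • ((0 : F), e)) ∈ M := M.add_mem hfe' (M.smul_mem t h0)
      have := hM _ hmem
      simpa [Prod.fst, Prod.snd, add_smul, smul_eq_mul] using this
    by_contra hne
    have := key (-(e' f + 1) / (e f))
    rw [div_mul_cancel₀ _ hne] at this
    linarith
  · intro hann
    set M' := M ⊔ Submodule.span ℝ {((0 : F), e)} with hM'
    have hmono : ∀ p ∈ M', (0 : ℝ) ≤ p.2 p.1 := by
      intro p hp
      rw [hM', Submodule.mem_sup] at hp
      obtain ⟨m, hm, s, hs, rfl⟩ := hp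
      rw [Submodule.mem_span_singleton] at hs
      obtain ⟨t, rfl⟩ := hs
      have he0 : e m.1 = 0 := hann m.1 ⟨m.2, hm⟩
      have := hM m hm
      simp [Prod.fst, Prod.snd, he0]
      linarith [this]
    have heq := hMmax M' hmono le_sup_left
    rw [← heq, hM']
    exact Submodule.mem_sup_right (Submodule.mem_span_singleton_self _)
end

section
/- Let Y, Z be n × n real matrices (viewed as n × n blocks with rows spanning) with Y Zᵀ + Z Yᵀ ≥ 0 (positive semidefinite) and rank [Z Y] = n. Then M = range of the map v ↦ (Zᵀ v, Yᵀ v) ⊆ ℝ^n × ℝ^n is a maximally monotone structure; conversely every maximally monotone structure in ℝ^n × ℝ^n arises this way. -/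
/-!
For `p = (Zᵀ v, Yᵀ v)` one has `p.2 ⬝ᵥ p.1 = ½ vᵀ (Y Zᵀ + Z Yᵀ) v`, so the range is monotone
exactly when `Y Zᵀ + Z Yᵀ` is positive semidefinite; and the range is that of `[Z Y]ᵀ` up to the
identification `ℝ^(n ⊕ n) ≃ ℝ^n × ℝ^n`, so its dimension is `rank [Z Y]`. Conversely, a basis
`b` of an `n`-dimensional `M` gives `Z`, `Y` whose `i`-th rows are the two components of `b i`,
and then `(Zᵀ v, Yᵀ v) = ∑ vᵢ • b i` sweeps out `M`.
-/

open Matrix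

section
variable {ι m n R : Type*} [Fintype ι]

theorem dotProduct_mul_mulVec_self [Fintype m] [CommSemiring R] (A : Matrix ι m R)
    (B : Matrix m ι R) (x : ι → R) : x ⬝ᵥ ((A * B) *ᵥ x) = (Aᵀ *ᵥ x) ⬝ᵥ (B *ᵥ x) := by
  rw [← mulVec_mulVec, dotProduct_mulVec, mulVec_transpose]

theorem dotProduct_mul_transpose_add_mulVec [Fintype m] [CommRing R] (Y Z : Matrix ι m R)
    (x : ι → R) : x ⬝ᵥ ((Y * Zᵀ + Z * Yᵀ) *ᵥ x) = 2 * ((Yᵀ *ᵥ x) ⬝ᵥ (Zᵀ *ᵥ x)) := by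
  rw [add_mulVec, dotProduct_add, dotProduct_mul_mulVec_self, dotProduct_mul_mulVec_self,
    dotProduct_comm (Zᵀ *ᵥ x), two_mul]

theorem posSemidef_mul_transpose_add_iff [Fintype m] (Y Z : Matrix ι m ℝ) :
    (Y * Zᵀ + Z * Yᵀ).PosSemidef ↔ ∀ x, 0 ≤ (Yᵀ *ᵥ x) ⬝ᵥ (Zᵀ *ᵥ x) := by
  have hHerm : (Y * Zᵀ + Z * Yᵀ).IsHermitian := by
    simp only [IsHermitian, conjTranspose_eq_transpose_of_trivial, transpose_add,
      transpose_mul, transpose_transpose, add_comm]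
  simp only [posSemidef_iff_dotProduct_mulVec, hHerm, true_and, star_trivial,
    dotProduct_mul_transpose_add_mulVec]
  exact forall_congr' fun x => by constructor <;> intro h <;> linarith

theorem finrank_range_transpose_mulVecLin_prod [Fintype m] [Fintype n] {K : Type*} [Field K]
    (Z : Matrix ι m K) (Y : Matrix ι n K) :
    Module.finrank K (LinearMap.range (Zᵀ.mulVecLin.prod Yᵀ.mulVecLin)) =
      (fromCols Z Y).rank := by
  have h : Zᵀ.mulVecLin.prod Yᵀ.mulVecLin =
      (LinearEquiv.sumArrowLequivProdArrow m n K K).toLinearMap ∘ₗ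
        (fromRows Zᵀ Yᵀ).mulVecLin := by
    ext x <;> simp [fromRows_mulVec, LinearEquiv.sumArrowLequivProdArrow, mulVec_transpose]
  rw [h, LinearMap.range_comp, LinearEquiv.finrank_map_eq, ← rank_transpose, transpose_fromCols]
  rfl

theorem transpose_mulVecLin_prod_eq_linearCombination [CommSemiring R]
    (v : ι → (m → R) × (n → R)) :
    (of fun i => (v i).1)ᵀ.mulVecLin.prod (of fun i => (v i).2)ᵀ.mulVecLin =
      Fintype.linearCombination R v := by
  ext x <;> simp [vecMul_eq_sum, Fintype.linearCombination_apply, Prod.fst_sum, Prod.snd_sum]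

theorem range_transpose_mulVecLin_prod_of_basis {K : Type*} [Field K]
    {M : Submodule K ((m → K) × (n → K))} (b : Module.Basis ι K M) :
    LinearMap.range ((of fun i => (b i : (m → K) × (n → K)).1)ᵀ.mulVecLin.prod
      (of fun i => (b i : (m → K) × (n → K)).2)ᵀ.mulVecLin) = M := by
  rw [transpose_mulVecLin_prod_eq_linearCombination, Fintype.range_linearCombination]
  change Submodule.span K (Set.range (M.subtype ∘ b)) = M
  rw [Set.range_comp, Submodule.span_image, b.span_eq, Submodule.map_subtype_top]

end

theorem YZ_image_iff_maximally_monotone (n : ℕ) :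
    (∀ Y Z : Matrix (Fin n) (Fin n) ℝ,
      (Y * Zᵀ + Z * Yᵀ).PosSemidef →
      (Matrix.fromCols Z Y).rank = n →
        (∀ p ∈ LinearMap.range ((Zᵀ.mulVecLin).prod (Yᵀ.mulVecLin)),
          (0 : ℝ) ≤ p.2 ⬝ᵥ p.1) ∧
        Module.finrank ℝ
          (LinearMap.range ((Zᵀ.mulVecLin).prod (Yᵀ.mulVecLin))) = n) ∧
    (∀ M : Submodule ℝ ((Fin n → ℝ) × (Fin n → ℝ)),
      (∀ p ∈ M, (0 : ℝ) ≤ p.2 ⬝ᵥ p.1) → Module.finrank ℝ M = n →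
        ∃ Y Z : Matrix (Fin n) (Fin n) ℝ,
          (Y * Zᵀ + Z * Yᵀ).PosSemidef ∧
          (Matrix.fromCols Z Y).rank = n ∧
          M = LinearMap.range ((Zᵀ.mulVecLin).prod (Yᵀ.mulVecLin))) := by
  refine ⟨fun Y Z hpsd hrank => ⟨?_, ?_⟩, fun M hmono hdim => ?_⟩
  · rintro _ ⟨x, rfl⟩
    exact (posSemidef_mul_transpose_add_iff Y Z).1 hpsd x
  · rw [finrank_range_transpose_mulVecLin_prod, hrank]
  · let b := Module.finBasisOfFinrankEq ℝ M hdim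
    set Z := of fun i => (b i : (Fin n → ℝ) × (Fin n → ℝ)).1
    set Y := of fun i => (b i : (Fin n → ℝ) × (Fin n → ℝ)).2
    have hM : LinearMap.range (Zᵀ.mulVecLin.prod Yᵀ.mulVecLin) = M :=
      range_transpose_mulVecLin_prod_of_basis b
    refine ⟨Y, Z, (posSemidef_mul_transpose_add_iff Y Z).2 fun x => ?_, ?_, hM.symm⟩
    · exact hmono _ (hM ▸ LinearMap.mem_range_self _ x)
    · rw [← finrank_range_transpose_mulVecLin_prod, hM, hdim]
end

section
/- Let M ⊆ ℝ^n × ℝ^n be a maximally monotone structure. Then there exist a k ≥ 0, a Dirac structure D ⊆ ℝ^n × ℝ^n × ℝ^k × ℝ^k and a nonnegative Lagrange structure R ⊆ ℝ^k × ℝ^k such that M equals the composition D ∘ R = {(f,e) : ∃ (f_R,e_R), (f,e,−f_R,e_R) ∈ D and (f_R,e_R) ∈ R}. -/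
open Matrix Module

/-!
Parametrize `M` as `{(F x, E x)}` by matrices `F E`. Monotonicity makes the symmetric part `S` of
`Eᵀ F` positive semidefinite, so its graph `R` is a nonnegative Lagrange structure, and
`D = {(F x, E x + y, -x, S x + Fᵀ y)}` is power conserving because the skew part of `Eᵀ F` has zero
quadratic form. Then `D ∘ R = {(F x, E x + y) | Fᵀ y = 0}`: the `y`-term adds `{0} × (dom M)ᗮ` to `M`.
This sum is still monotone, and a monotone subspace meets the antidiagonal `{(f, -f)}` trivially,
so it has dimension at most `n`; by maximality it is `M`.
-/

theorem LinearMap.finrank_graph {K V W : Type*} [DivisionRing K] [AddCommGroup V] [Module K V]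
    [AddCommGroup W] [Module K W] (f : V →ₗ[K] W) : finrank K f.graph = finrank K V := by
  rw [LinearMap.graph_eq_range_prod, LinearMap.finrank_range_of_inj]
  exact fun x y h => congrArg Prod.fst h

section

variable {ι : Type*} [Fintype ι]

theorem finrank_le_card_of_monotone (N : Submodule ℝ ((ι → ℝ) × (ι → ℝ)))
    (hN : ∀ p ∈ N, (0 : ℝ) ≤ p.2 ⬝ᵥ p.1) : finrank ℝ N ≤ Fintype.card ι := by
  suffices h : Function.Injective ((LinearMap.fst ℝ _ _ + LinearMap.snd ℝ _ _) ∘ₗ N.subtype) by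
    simpa using LinearMap.finrank_le_finrank_of_injective h
  refine (injective_iff_map_eq_zero _).2 fun ⟨⟨f, e⟩, hp⟩ h0 => ?_
  have he : e = -f := eq_neg_of_add_eq_zero_right h0
  have hf : f ⬝ᵥ f ≤ 0 := by simpa [he] using hN _ hp
  have hf0 : f = 0 := dotProduct_self_eq_zero.1 (le_antisymm hf (dotProduct_self_star_nonneg f))
  simp [hf0, he]

theorem zero_prod_mem_of_monotone {M : Submodule ℝ ((ι → ℝ) × (ι → ℝ))}
    (hM : ∀ p ∈ M, (0 : ℝ) ≤ p.2 ⬝ᵥ p.1) (hdim : finrank ℝ M = Fintype.card ι)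
    {y : ι → ℝ} (hy : ∀ p ∈ M, y ⬝ᵥ p.1 = 0) : ((0 : ι → ℝ), y) ∈ M := by
  set N := M ⊔ ℝ ∙ ((0 : ι → ℝ), y)
  have hN : ∀ p ∈ N, (0 : ℝ) ≤ p.2 ⬝ᵥ p.1 := by
    intro p hp
    obtain ⟨m, hm, q, hq, rfl⟩ := Submodule.mem_sup.1 hp
    obtain ⟨c, rfl⟩ := Submodule.mem_span_singleton.1 hq
    simpa [add_dotProduct, hy m hm] using hM m hm
  have hMN : M = N := Submodule.eq_of_le_of_finrank_le le_sup_left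
    (hdim ▸ finrank_le_card_of_monotone N hN)
  exact hMN ▸ Submodule.mem_sup_right (Submodule.mem_span_singleton_self _)

theorem coe_eq_setOf_add_ker_transpose {κ : Type*} [Fintype κ]
    {M : Submodule ℝ ((ι → ℝ) × (ι → ℝ))} (hM : ∀ p ∈ M, (0 : ℝ) ≤ p.2 ⬝ᵥ p.1)
    (hdim : finrank ℝ M = Fintype.card ι) {F E : Matrix ι κ ℝ}
    (hFE : ∀ p, p ∈ M ↔ ∃ x, (F *ᵥ x, E *ᵥ x) = p) :
    (M : Set ((ι → ℝ) × (ι → ℝ))) = {p | ∃ x y, Fᵀ *ᵥ y = 0 ∧ (F *ᵥ x, E *ᵥ x + y) = p} := by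
  ext p
  constructor
  · intro hp
    obtain ⟨x, rfl⟩ := (hFE p).1 hp
    exact ⟨x, 0, mulVec_zero _, by simp⟩
  · rintro ⟨x, y, hy, rfl⟩
    have hy_perp : ∀ q ∈ M, y ⬝ᵥ q.1 = 0 := by
      intro q hq
      obtain ⟨x', rfl⟩ := (hFE q).1 hq
      rw [← dotProduct_transpose_mulVec, hy, dotProduct_zero]
    simpa using M.add_mem ((hFE _).2 ⟨x, rfl⟩) (zero_prod_mem_of_monotone hM hdim hy_perp)

theorem Submodule.exists_matrix_range_eq {k : ℕ} (M : Submodule ℝ ((ι → ℝ) × (ι → ℝ)))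
    (hk : finrank ℝ M = k) :
    ∃ F E : Matrix ι (Fin k) ℝ, ∀ p, p ∈ M ↔ ∃ x, (F *ᵥ x, E *ᵥ x) = p := by
  let L := M.subtype ∘ₗ (finBasisOfFinrankEq ℝ M hk).equivFun.symm.toLinearMap
  refine ⟨LinearMap.toMatrix' (LinearMap.fst ℝ _ _ ∘ₗ L),
    LinearMap.toMatrix' (LinearMap.snd ℝ _ _ ∘ₗ L), fun p => ?_⟩
  simp only [LinearMap.toMatrix'_mulVec, LinearMap.comp_apply, LinearMap.coe_fst,
    LinearMap.coe_snd, Prod.mk.eta]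
  constructor
  · intro hp
    exact ⟨(finBasisOfFinrankEq ℝ M hk).equivFun ⟨p, hp⟩, by simp [L]⟩
  · rintro ⟨x, rfl⟩
    exact ((finBasisOfFinrankEq ℝ M hk).equivFun.symm x).2

end

section

variable {κ : Type*} [Fintype κ] {S : Matrix κ κ ℝ}

theorem graph_mulVecLin_isLagrangian (hS : S.IsSymm) :
    ∀ p ∈ S.mulVecLin.graph, ∀ q ∈ S.mulVecLin.graph, p.2 ⬝ᵥ q.1 - q.2 ⬝ᵥ p.1 = 0 := by
  intro p hp q hq
  rw [LinearMap.mem_graph_iff, mulVecLin_apply] at hp hq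
  rw [hp, hq, sub_eq_zero, dotProduct_comm, ← dotProduct_transpose_mulVec, hS.eq]
  exact dotProduct_comm _ _

theorem graph_mulVecLin_nonneg (hS : ∀ x, 0 ≤ S *ᵥ x ⬝ᵥ x) :
    ∀ p ∈ S.mulVecLin.graph, (0 : ℝ) ≤ p.2 ⬝ᵥ p.1 := by
  intro p hp
  rw [LinearMap.mem_graph_iff, mulVecLin_apply] at hp
  exact hp ▸ hS p.1

end

section

variable {ι κ : Type*} [Fintype ι] (F E : Matrix ι κ ℝ)

noncomputable def resistance : Matrix κ κ ℝ := (2 : ℝ)⁻¹ • (Eᵀ * F + Fᵀ * E)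

theorem isSymm_resistance : (resistance F E).IsSymm := by
  simp [resistance, Matrix.IsSymm, Matrix.transpose_add, Matrix.transpose_mul, add_comm]

variable [Fintype κ]

theorem resistance_mulVec_dotProduct (x : κ → ℝ) :
    resistance F E *ᵥ x ⬝ᵥ x = E *ᵥ x ⬝ᵥ F *ᵥ x := by
  rw [resistance, smul_mulVec, Matrix.add_mulVec, ← mulVec_mulVec, ← mulVec_mulVec, smul_dotProduct,
    add_dotProduct, dotProduct_comm, dotProduct_transpose_mulVec, dotProduct_comm (Fᵀ *ᵥ _),
    dotProduct_transpose_mulVec, dotProduct_comm (F *ᵥ x)]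
  ring

noncomputable def diracParam :
    (κ → ℝ) × (ι → ℝ) →ₗ[ℝ] (ι → ℝ) × (ι → ℝ) × (κ → ℝ) × (κ → ℝ) :=
  (F.mulVecLin ∘ₗ LinearMap.fst ℝ _ _).prod
    ((E.mulVecLin ∘ₗ LinearMap.fst ℝ _ _ + LinearMap.snd ℝ _ _).prod
      ((-LinearMap.fst ℝ _ _).prod
        ((resistance F E).mulVecLin ∘ₗ LinearMap.fst ℝ _ _ + Fᵀ.mulVecLin ∘ₗ LinearMap.snd ℝ _ _)))

theorem diracParam_apply (x : κ → ℝ) (y : ι → ℝ) :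
    diracParam F E (x, y) = (F *ᵥ x, E *ᵥ x + y, -x, resistance F E *ᵥ x + Fᵀ *ᵥ y) :=
  rfl

theorem diracParam_injective : Function.Injective (diracParam F E) := by
  rintro ⟨x, y⟩ ⟨x', y'⟩ h
  simp only [diracParam_apply, Prod.mk.injEq, neg_inj] at h
  obtain ⟨hFx, hEy, rfl, -⟩ := h
  simpa using hEy

noncomputable def diracStructure : Submodule ℝ ((ι → ℝ) × (ι → ℝ) × (κ → ℝ) × (κ → ℝ)) :=
  LinearMap.range (diracParam F E)

theorem finrank_diracStructure :
    finrank ℝ (diracStructure F E) = Fintype.card ι + Fintype.card κ := by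
  rw [diracStructure, LinearMap.finrank_range_of_inj (diracParam_injective F E), finrank_prod,
    finrank_fintype_fun_eq_card, finrank_fintype_fun_eq_card, add_comm]

theorem diracStructure_power_eq_zero :
    ∀ p ∈ diracStructure F E, p.2.1 ⬝ᵥ p.1 + p.2.2.2 ⬝ᵥ p.2.2.1 = 0 := by
  rintro _ ⟨⟨x, y⟩, rfl⟩
  have hS := resistance_mulVec_dotProduct F E x
  have hF := dotProduct_transpose_mulVec F x y
  simp only [diracParam_apply, add_dotProduct, dotProduct_neg]
  rw [hS, dotProduct_comm (Fᵀ *ᵥ y), hF]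
  ring

theorem diracStructure_comp_graph :
    {p : (ι → ℝ) × (ι → ℝ) | ∃ fR eR : κ → ℝ,
        (p.1, p.2, -fR, eR) ∈ diracStructure F E ∧ (fR, eR) ∈ (resistance F E).mulVecLin.graph} =
      {p | ∃ x y, Fᵀ *ᵥ y = 0 ∧ (F *ᵥ x, E *ᵥ x + y) = p} := by
  ext ⟨f, e⟩
  simp only [Set.mem_ofPred_eq, diracStructure, LinearMap.mem_range, Prod.exists, diracParam_apply,
    LinearMap.mem_graph_iff, mulVecLin_apply, Prod.mk.injEq, neg_inj]
  constructor
  · rintro ⟨fR, eR, ⟨x, y, hf, he, rfl, rfl⟩, hR⟩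
    exact ⟨x, y, by simpa using hR, hf, he⟩
  · rintro ⟨x, y, hy, hf, he⟩
    exact ⟨x, resistance F E *ᵥ x, ⟨x, y, hf, he, rfl, by simp [hy]⟩, rfl⟩

end

theorem mms_eq_dirac_comp_resistive
    (n : ℕ) (M : Submodule ℝ ((Fin n → ℝ) × (Fin n → ℝ)))
    (hM : ∀ p ∈ M, (0 : ℝ) ≤ p.2 ⬝ᵥ p.1)
    (hdim : Module.finrank ℝ M = n) :
    ∃ (k : ℕ)
      (D : Submodule ℝ ((Fin n → ℝ) × (Fin n → ℝ) × (Fin k → ℝ) × (Fin k → ℝ)))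
      (R : Submodule ℝ ((Fin k → ℝ) × (Fin k → ℝ))),
      (∀ p ∈ D, p.2.1 ⬝ᵥ p.1 + p.2.2.2 ⬝ᵥ p.2.2.1 = 0) ∧
      Module.finrank ℝ D = n + k ∧
      (∀ p ∈ R, ∀ q ∈ R, p.2 ⬝ᵥ q.1 - q.2 ⬝ᵥ p.1 = 0) ∧
      (∀ p ∈ R, (0 : ℝ) ≤ p.2 ⬝ᵥ p.1) ∧
      Module.finrank ℝ R = k ∧
      (M : Set ((Fin n → ℝ) × (Fin n → ℝ)))
        = {p | ∃ fR eR : Fin k → ℝ, (p.1, p.2, -fR, eR) ∈ D ∧ (fR, eR) ∈ R} := by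
  obtain ⟨F, E, hFE⟩ := M.exists_matrix_range_eq hdim
  have hFE_nonneg : ∀ x, 0 ≤ E *ᵥ x ⬝ᵥ F *ᵥ x := fun x => hM _ ((hFE _).2 ⟨x, rfl⟩)
  refine ⟨n, diracStructure F E, (resistance F E).mulVecLin.graph,
    diracStructure_power_eq_zero F E, by simp [finrank_diracStructure],
    graph_mulVecLin_isLagrangian (isSymm_resistance F E),
    graph_mulVecLin_nonneg fun x => resistance_mulVec_dotProduct F E x ▸ hFE_nonneg x,
    by simp [LinearMap.finrank_graph], ?_⟩
  rw [diracStructure_comp_graph]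
  exact coe_eq_setOf_add_ker_transpose hM (by simpa using hdim) hFE
end
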